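/- Let X be a real normed space and let x, y ∈ X be nonzero vectors with x ⊥_W y. Then x and y are linearly independent. -/
import Mathlib


/-- Bisectrix-orthogonality `x ⊥_W y`. -/
def bisectrixOrth {X : Type*} [NormedAddCommGroup X] [NormedSpace ℝ X] (x y : X) : Prop :=
  ‖(‖y‖ : ℝ) • x + (‖x‖ : ℝ) • y‖ = Real.sqrt 2 * ‖x‖ * ‖y‖

/-- nonzero bisectrix-orthogonal vectors are linearly independent. -/
theorem stmt_14 {X : Type*} [NormedAddCommGroup X] [NormedSpace ℝ X]
    (x y : X) (hx : x ≠ 0) (hy : y ≠ 0) (h : bisectrixOrth x y) :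
    LinearIndependent ℝ ![x, y] := by
  rw [LinearIndependent.pair_iff]
  intro s t hst
  by_contra hc
  -- first show t ≠ 0
  have ht : t ≠ 0 := by
    intro ht0
    subst ht0
    simp only [zero_smul, add_zero] at hst
    rcases smul_eq_zero.mp hst with hs | hx0
    · exact hc ⟨hs, rfl⟩
    · exact hx hx0
  set c : ℝ := -(s / t) with hcdef
  have hyc : y = c • x := by
    have : t • y = (-s) • x := by
      rw [neg_smul, eq_neg_iff_add_eq_zero, add_comm]; exact hst
    calc y = t⁻¹ • (t • y) := by rw [smul_smul, inv_mul_cancel₀ ht, one_smul]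
      _ = t⁻¹ • ((-s) • x) := by rw [this]
      _ = c • x := by rw [smul_smul, hcdef]; ring_nf
  have hxn : (0:ℝ) < ‖x‖ := norm_pos_iff.mpr hx
  have hcne : c ≠ 0 := by
    intro h0
    rw [h0, zero_smul] at hyc
    exact hy hyc
  have hny : ‖y‖ = |c| * ‖x‖ := by rw [hyc, norm_smul, Real.norm_eq_abs]
  unfold bisectrixOrth at h
  rw [hyc, norm_smul, Real.norm_eq_abs, smul_smul] at h
  have hcomb : (|c| * ‖x‖) • x + (‖x‖ * c) • x = ((|c| + c) * ‖x‖) • x := by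
    rw [← add_smul]; ring_nf
  rw [hcomb, norm_smul, Real.norm_eq_abs] at h
  have habs : |(|c| + c) * ‖x‖| = (|c| + c) * ‖x‖ := by
    apply abs_of_nonneg
    exact mul_nonneg (by rcases abs_cases c with ⟨h1,_⟩|⟨h1,_⟩ <;> linarith) hxn.le
  rw [habs] at h
  -- h : (|c| + c) * ‖x‖ * ‖x‖ = √2 * ‖x‖ * (|c| * ‖x‖)
  have key : |c| + c = Real.sqrt 2 * |c| := by
    have h2 : (|c| + c) * (‖x‖ * ‖x‖) = (Real.sqrt 2 * |c|) * (‖x‖ * ‖x‖) := by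
      linear_combination h
    exact mul_right_cancel₀ (by positivity) h2
  have hs2 : Real.sqrt 2 < 2 := by
    nlinarith [Real.sq_sqrt (by norm_num : (2:ℝ) ≥ 0), Real.sqrt_nonneg 2]
  have hs2' : (1:ℝ) < Real.sqrt 2 := by
    nlinarith [Real.sq_sqrt (by norm_num : (2:ℝ) ≥ 0), Real.sqrt_nonneg 2]
  rcases lt_trichotomy c 0 with h1 | h1 | h1
  · rw [abs_of_neg h1] at key; nlinarith
  · exact hcne h1
  · rw [abs_of_pos h1] at key; nlinarith
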